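/- arXiv:1309.0713 — 8 statements merged into one kernel-verified Lean document; each statement's English description precedes it below -/
import Mathlib

section
/- Let f : ℝ → ℂ be continuous, vanishing at infinity, and nowhere zero. Then, inside the C*-algebra of bounded continuous functions ℝ → ℂ (sup norm, pointwise operations, pointwise complex conjugation as involution), the topological closure of the *-subalgebra generated by {f} ∪ {χ_l : l ∈ ℝ} equals the topological closure of the *-subalgebra generated by C₀(ℝ) ∪ {χ_l : l ∈ ℝ} (the latter closed *-subalgebra is C₀(ℝ) ⊕ AP(ℝ), the sums of a function vanishing at infinity and an almost periodic function). -/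
open BoundedContinuousFunction

/-- The character `χ_l : x ↦ exp(i l x)`, as a bounded continuous function `ℝ → ℂ`. -/
noncomputable def charBCF (l : ℝ) : BoundedContinuousFunction ℝ ℂ :=
  BoundedContinuousFunction.ofNormedAddCommGroup
    (fun x => Complex.exp (Complex.I * l * x))
    (by continuity) 1
    (fun x => by
      show ‖Complex.exp (Complex.I * (l : ℂ) * (x : ℂ))‖ ≤ 1
      rw [show Complex.I * (l : ℂ) * (x : ℂ) = ((l * x : ℝ) : ℂ) * Complex.I by
        push_cast; ring]
      rw [Complex.norm_exp_ofReal_mul_I])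


lemma norm_charval (l x : ℝ) : ‖Complex.exp (Complex.I * l * x)‖ = 1 := by
  rw [show Complex.I * (l : ℂ) * (x : ℂ) = ((l * x : ℝ) : ℂ) * Complex.I by
    push_cast; ring]
  exact Complex.norm_exp_ofReal_mul_I _

/-- `f · χ_l` as an element of `C₀(ℝ)`. -/
noncomputable def mulChar (f : ZeroAtInftyContinuousMap ℝ ℂ) (l : ℝ) :
    ZeroAtInftyContinuousMap ℝ ℂ where
  toFun x := f x * Complex.exp (Complex.I * l * x)
  continuous_toFun := f.continuous.mul (by continuity)
  zero_at_infty' := by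
    rw [tendsto_zero_iff_norm_tendsto_zero]
    have h := (tendsto_zero_iff_norm_tendsto_zero).mp f.zero_at_infty'
    refine h.congr fun x => ?_
    rw [norm_mul, norm_charval, mul_one]; rfl

/-- Extension of a `C₀` function to the one-point compactification. -/
noncomputable def extC (g : ZeroAtInftyContinuousMap ℝ ℂ) : C(OnePoint ℝ, ℂ) :=
  OnePoint.continuousMapMk g.toContinuousMap 0
    (by rw [Filter.coclosedCompact_eq_cocompact]; exact g.zero_at_infty')

@[simp] lemma extC_coe (g : ZeroAtInftyContinuousMap ℝ ℂ) (x : ℝ) :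
    extC g (x : OnePoint ℝ) = g x := rfl

@[simp] lemma extC_infty (g : ZeroAtInftyContinuousMap ℝ ℂ) :
    extC g (OnePoint.infty) = 0 := rfl

/-- Restriction map from `C(OnePoint ℝ, ℂ)` to bounded continuous functions on `ℝ`. -/
noncomputable def restrC (h : C(OnePoint ℝ, ℂ)) : BoundedContinuousFunction ℝ ℂ :=
  (BoundedContinuousFunction.mkOfCompact h).compContinuous
    ⟨(OnePoint.some : ℝ → OnePoint ℝ), OnePoint.continuous_coe⟩

@[simp] lemma restrC_apply (h : C(OnePoint ℝ, ℂ)) (x : ℝ) :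
    restrC h x = h (x : OnePoint ℝ) := rfl

lemma dist_restrC (h₁ h₂ : C(OnePoint ℝ, ℂ)) :
    dist (restrC h₁) (restrC h₂) ≤ dist h₁ h₂ := by
  refine (BoundedContinuousFunction.dist_le dist_nonneg).mpr fun x => ?_
  simpa using ContinuousMap.dist_apply_le_dist (f := h₁) (g := h₂) (x : OnePoint ℝ)

lemma restrC_extC (g : ZeroAtInftyContinuousMap ℝ ℂ) : restrC (extC g) = g.toBCF := by
  ext x; rfl

lemma char_ne (x y : ℝ) (hxy : x ≠ y) :
    Complex.exp (Complex.I * ((Real.pi / (x - y) : ℝ) : ℂ) * x)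
      ≠ Complex.exp (Complex.I * ((Real.pi / (x - y) : ℝ) : ℂ) * y) := by
  intro h
  rw [Complex.exp_eq_exp_iff_exists_int] at h
  obtain ⟨n, hn⟩ := h
  have hxy' : (x : ℂ) - y ≠ 0 := by
    simpa [sub_eq_zero] using fun h' => hxy (by exact_mod_cast h')
  have hI : (Complex.I : ℂ) ≠ 0 := Complex.I_ne_zero
  have hpi : (Real.pi : ℂ) ≠ 0 := by exact_mod_cast Real.pi_ne_zero
  have h2 : Complex.I * ((Real.pi : ℂ) / ((x:ℂ) - y)) * ((x:ℂ) - y)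
      = n * (2 * Real.pi * Complex.I) := by
    push_cast at hn ⊢
    linear_combination hn
  rw [mul_assoc, div_mul_cancel₀ _ hxy'] at h2
  have hπI : (Real.pi : ℂ) * Complex.I ≠ 0 := mul_ne_zero hpi hI
  have h3 : (1 : ℂ) = 2 * n := by
    have h4 : (Real.pi : ℂ) * Complex.I * 1 = (Real.pi : ℂ) * Complex.I * (2 * n) := by
      linear_combination h2
    exact mul_left_cancel₀ hπI h4
  have h5 : (1 : ℤ) = 2 * n := by exact_mod_cast h3
  omega

/-- For a nowhere-vanishing `f ∈ C₀(ℝ)`, the closed *-subalgebra of the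
bounded continuous functions `ℝ → ℂ` generated by `{f} ∪ {χ_l : l ∈ ℝ}` coincides with the
closed *-subalgebra generated by `C₀(ℝ) ∪ {χ_l : l ∈ ℝ}` (which is `C₀(ℝ) ⊕ AP(ℝ)`). -/
theorem statement2 (f : ZeroAtInftyContinuousMap ℝ ℂ) (hf : ∀ x, f x ≠ 0) :
    closure ((NonUnitalStarAlgebra.adjoin ℂ
        ({f.toBCF} ∪ Set.range charBCF) : Set (BoundedContinuousFunction ℝ ℂ)))
      = closure ((NonUnitalStarAlgebra.adjoin ℂ
        (Set.range (ZeroAtInftyContinuousMap.toBCF : ZeroAtInftyContinuousMap ℝ ℂ →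
            BoundedContinuousFunction ℝ ℂ) ∪ Set.range charBCF) :
        Set (BoundedContinuousFunction ℝ ℂ))) := by
  set A := NonUnitalStarAlgebra.adjoin ℂ ({f.toBCF} ∪ Set.range charBCF) with hA
  have hfA : f.toBCF ∈ A := NonUnitalStarAlgebra.subset_adjoin ℂ _ (Or.inl rfl)
  have hcharA : ∀ l, charBCF l ∈ A := fun l =>
    NonUnitalStarAlgebra.subset_adjoin ℂ _ (Or.inr ⟨l, rfl⟩)
  have hchar0 : ∀ (r : ℂ) (x : ℝ), r * charBCF 0 x = r := by
    intro r x
    show r * Complex.exp (Complex.I * (0:ℝ) * x) = r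
    simp
  -- key: every C₀ function is in the closure of A
  have key : ∀ g : ZeroAtInftyContinuousMap ℝ ℂ,
      g.toBCF ∈ closure (A : Set (BoundedContinuousFunction ℝ ℂ)) := by
    intro g
    set B := StarAlgebra.adjoin ℂ (Set.range fun l => extC (mulChar f l)) with hB
    have hmem : ∀ l, extC (mulChar f l) ∈ B := fun l =>
      StarAlgebra.subset_adjoin ℂ _ ⟨l, rfl⟩
    have hsep : B.SeparatesPoints := by
      rintro x y hxy
      induction x using OnePoint.rec with
      | infty =>
        induction y using OnePoint.rec with
        | infty => exact absurd rfl hxy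
        | coe y =>
          refine ⟨_, ⟨_, hmem 0, rfl⟩, ?_⟩
          show extC (mulChar f 0) OnePoint.infty ≠ extC (mulChar f 0) (y : OnePoint ℝ)
          rw [extC_infty, extC_coe]
          show (0 : ℂ) ≠ f y * Complex.exp (Complex.I * (0:ℝ) * y)
          simpa using (hf y).symm
      | coe x =>
        induction y using OnePoint.rec with
        | infty =>
          refine ⟨_, ⟨_, hmem 0, rfl⟩, ?_⟩
          show extC (mulChar f 0) (x : OnePoint ℝ) ≠ extC (mulChar f 0) OnePoint.infty
          rw [extC_infty, extC_coe]
          show f x * Complex.exp (Complex.I * (0:ℝ) * x) ≠ (0 : ℂ)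
          simpa using hf x
        | coe y =>
          have hxy' : x ≠ y := fun h => hxy (by rw [h])
          by_cases hfxy : f x = f y
          · refine ⟨_, ⟨_, hmem (Real.pi / (x - y)), rfl⟩, ?_⟩
            show extC (mulChar f _) (x : OnePoint ℝ) ≠ extC (mulChar f _) (y : OnePoint ℝ)
            rw [extC_coe, extC_coe]
            show f x * Complex.exp (Complex.I * ((Real.pi / (x-y) : ℝ):ℂ) * x)
              ≠ f y * Complex.exp (Complex.I * ((Real.pi / (x-y) : ℝ):ℂ) * y)
            rw [hfxy]
            exact fun h => char_ne x y hxy' (mul_left_cancel₀ (hf y) h)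
          · refine ⟨_, ⟨_, hmem 0, rfl⟩, ?_⟩
            show extC (mulChar f 0) (x : OnePoint ℝ) ≠ extC (mulChar f 0) (y : OnePoint ℝ)
            rw [extC_coe, extC_coe]
            show f x * Complex.exp (Complex.I * (0:ℝ) * x)
              ≠ f y * Complex.exp (Complex.I * (0:ℝ) * y)
            simpa using hfxy
    have htop := ContinuousMap.starSubalgebra_topologicalClosure_eq_top_of_separatesPoints B hsep
    have hg : extC g ∈ closure (B : Set C(OnePoint ℝ, ℂ)) := by
      have h1 : extC g ∈ B.topologicalClosure := htop ▸ StarSubalgebra.mem_top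
      exact h1
    have himg : ∀ b ∈ B, restrC b ∈ A := by
      intro b hb
      induction hb using StarAlgebra.adjoin_induction with
      | mem x hx =>
        obtain ⟨l, rfl⟩ := hx
        have heq : restrC (extC (mulChar f l)) = f.toBCF * charBCF l := by
          ext x; rfl
        rw [heq]
        exact mul_mem hfA (hcharA l)
      | algebraMap r =>
        have heq : restrC (algebraMap ℂ C(OnePoint ℝ, ℂ) r) = r • charBCF 0 := by
          ext x
          show r = r * charBCF 0 x
          rw [hchar0]
        rw [heq]
        exact SMulMemClass.smul_mem r (hcharA 0)
      | add x y hx hy ihx ihy =>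
        have heq : restrC (x + y) = restrC x + restrC y := by ext z; rfl
        rw [heq]; exact add_mem ihx ihy
      | mul x y hx hy ihx ihy =>
        have heq : restrC (x * y) = restrC x * restrC y := by ext z; rfl
        rw [heq]; exact mul_mem ihx ihy
      | star x hx ihx =>
        have heq : restrC (star x) = star (restrC x) := by ext z; rfl
        rw [heq]; exact star_mem ihx
    rw [← restrC_extC g]
    rw [Metric.mem_closure_iff] at hg ⊢
    intro ε hε
    obtain ⟨b, hbB, hbd⟩ := hg ε hε
    exact ⟨restrC b, himg b hbB, lt_of_le_of_lt (dist_restrC _ _) hbd⟩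
  -- conclude
  apply subset_antisymm
  · apply closure_mono
    intro z hz
    exact NonUnitalStarAlgebra.adjoin_le
      (Set.union_subset
        (by rintro w rfl; exact NonUnitalStarAlgebra.subset_adjoin ℂ _ (Or.inl ⟨f, rfl⟩))
        (fun w hw => NonUnitalStarAlgebra.subset_adjoin ℂ _ (Or.inr hw))) hz
  · apply closure_minimal _ isClosed_closure
    intro z hz
    have hle : NonUnitalStarAlgebra.adjoin ℂ
        (Set.range (ZeroAtInftyContinuousMap.toBCF : ZeroAtInftyContinuousMap ℝ ℂ →
            BoundedContinuousFunction ℝ ℂ) ∪ Set.range charBCF) ≤ A.topologicalClosure := by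
      apply NonUnitalStarAlgebra.adjoin_le
      refine Set.union_subset ?_ ?_
      · rintro w ⟨g, rfl⟩
        exact key g
      · rintro w ⟨l, rfl⟩
        exact subset_closure (hcharA l)
    exact hle hz
end

section
/- Let f : ℝ → ℂ be continuous, vanishing at infinity, nowhere zero, and injective. Then f is a topological embedding: f is a homeomorphism of ℝ onto its range f(ℝ), the range carrying the subspace topology of ℂ. -/
open OnePoint Filter

/-- A continuous, injective function `f : ℝ → ℂ` which vanishes at infinity
and is nowhere zero is a topological embedding, i.e. a homeomorphism of `ℝ` onto its range
(with the subspace topology of `ℂ`). -/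
theorem statement4 (f : ℝ → ℂ) (hcont : Continuous f)
    (hzero : Filter.Tendsto f (Filter.cocompact ℝ) (nhds 0))
    (hne : ∀ x, f x ≠ 0) (hinj : Function.Injective f) :
    Topology.IsEmbedding f := by
  have hz : Tendsto f (coclosedCompact ℝ) (nhds 0) := by
    rwa [coclosedCompact_eq_cocompact]
  let g : C(OnePoint ℝ, ℂ) := OnePoint.continuousMapMk ⟨f, hcont⟩ 0 hz
  have hginj : Function.Injective g := by
    intro a b hab
    induction a using OnePoint.rec <;> induction b using OnePoint.rec <;>
      simp only [g, OnePoint.continuousMapMk, ContinuousMap.coe_mk,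
        OnePoint.elim_infty, OnePoint.elim_some] at hab ⊢
    · exact absurd hab.symm (hne _)
    · exact absurd hab (hne _)
    · exact congrArg _ (hinj hab)
  have hg : Topology.IsEmbedding g := (g.continuous.isClosedEmbedding hginj).isEmbedding
  have : f = g ∘ ((↑) : ℝ → OnePoint ℝ) := rfl
  rw [this]
  exact hg.comp OnePoint.isOpenEmbedding_coe.isEmbedding
end

section
/- Let l₁, …, l_k ∈ ℝ be ℤ-independent and let V ⊆ ℝ be a ℚ-linear subspace of ℝ (viewed as a vector space over ℚ) such that ℝ is the direct sum of span_ℚ{l₁, …, l_k} and V. Then for every group homomorphism ψ : (ℝ, +) → 𝕋, all nonzero rational numbers q₁, …, q_k, and all s₁, …, s_k ∈ 𝕋, there exists a group homomorphism ψ' : (ℝ, +) → 𝕋 such that ψ'(l_i / q_i) = s_i for all 1 ≤ i ≤ k and ψ'(v) = ψ(v) for all v ∈ V. -/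
/-!
Over `ℚ`, the vectors `lᵢ / qᵢ` form a basis of `span_ℚ {lᵢ}`, so a `ℚ`-linear functional on `ℝ`
vanishing on the complement `V` may take arbitrary values on them. Composing it with the
surjection `Circle.exp : ℝ → 𝕋` gives a character `χ`, trivial on `V`, with arbitrary prescribed
values at the `lᵢ / qᵢ`; then `ψ' = ψ · χ` for the right choice of those values.
-/

open Module

theorem AddChar.exists_apply_basis_eq_of_isCompl {ι M : Type*} [AddCommGroup M] [Module ℚ M]
    {p V : Submodule ℚ M} (hpV : IsCompl p V) (b : Basis ι ℚ p) (t : ι → Circle) :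
    ∃ χ : AddChar M Circle, (∀ i, χ (b i) = t i) ∧ ∀ v ∈ V, χ v = 1 := by
  choose θ hθ using fun i => Circle.exp_surjective (t i)
  let f : M →ₗ[ℚ] ℝ := LinearMap.ofIsCompl hpV (b.constr ℚ θ) 0
  refine ⟨Real.probChar.compAddMonoidHom f.toAddMonoidHom, fun i => ?_, fun v hv => ?_⟩
  · simp [f, LinearMap.ofIsCompl_apply_left, Real.probChar_apply', hθ]
  · have hf : f v = 0 := LinearMap.ofIsCompl_apply_right hpV (⟨v, hv⟩ : V)
    simp [hf]

/-- Let `l₁, …, l_k ∈ ℝ` be ℤ-independent (i.e. ℚ-linearly independent) and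
let `V` be a ℚ-linear subspace of `ℝ` complementary to `span_ℚ {l₁, …, l_k}`.  Then for every
(not necessarily continuous) group homomorphism `ψ : (ℝ, +) → 𝕋`, all nonzero rationals
`q₁, …, q_k` and all `s₁, …, s_k ∈ 𝕋`, there is a homomorphism `ψ' : (ℝ, +) → 𝕋` with
`ψ' (l_i / q_i) = s_i` for all `i` and `ψ' = ψ` on `V`. -/
theorem statement5 {k : ℕ} (l : Fin k → ℝ) (hl : LinearIndependent ℚ l)
    (V : Submodule ℚ ℝ) (hV : IsCompl (Submodule.span ℚ (Set.range l)) V)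
    (ψ : AddChar ℝ Circle) (q : Fin k → ℚ) (hq : ∀ i, q i ≠ 0) (s : Fin k → Circle) :
    ∃ ψ' : AddChar ℝ Circle,
      (∀ i, ψ' (l i / (q i : ℝ)) = s i) ∧ ∀ v ∈ V, ψ' v = ψ v := by
  let b : Basis (Fin k) ℚ (Submodule.span ℚ (Set.range l)) :=
    (Basis.span hl).unitsSMul fun i => Units.mk0 (q i)⁻¹ (inv_ne_zero (hq i))
  have hb : ∀ i, (b i : ℝ) = l i / q i := fun i => by
    simp [b, Basis.unitsSMul_apply, Basis.span_apply, Rat.smul_def, div_eq_inv_mul]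
  obtain ⟨χ, hχb, hχV⟩ :=
    AddChar.exists_apply_basis_eq_of_isCompl hV b fun i => (ψ (l i / q i))⁻¹ * s i
  refine ⟨ψ * χ, fun i => ?_, fun v hv => ?_⟩
  · rw [AddChar.mul_apply, ← hb, hχb, hb, mul_inv_cancel_left]
  · rw [AddChar.mul_apply, hχV v hv, mul_one]
end

section
/- Let l₁, …, l_k, h₁, …, h_q ∈ ℝ be such that l₁, …, l_k, h₁, …, h_q together are ℤ-independent, let m₁, …, m_k and n₁, …, n_q be nonzero integers, let A₁, …, A_k ⊆ 𝕋 be arbitrary subsets, and let B₁, …, B_q ⊆ 𝕋 be nonempty subsets. Set W := { ψ ∈ G_Bohr : ψ(l_i / m_i) ∈ A_i for all 1 ≤ i ≤ k and ψ(h_j / n_j) ∈ B_j for all 1 ≤ j ≤ q }. Then { (ψ(l₁), …, ψ(l_k)) : ψ ∈ W } = A₁^{m₁} × … × A_k^{m_k}, where for A ⊆ 𝕋 and m ∈ ℤ one sets A^m := { a^m : a ∈ A } (integer powers in the group 𝕋). -/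
/-!
Since `ψ (l / m) ^ m = ψ l`, every tuple `(ψ (lᵢ))` lies in the product of the `Aᵢ ^ mᵢ`.
Conversely, the rescaled reals `lᵢ / mᵢ, hⱼ / nⱼ` are still `ℚ`-independent, so a `ℚ`-linear
map `ℝ → ℝ` sends them to arbitrary lifts of chosen points of `Aᵢ` and `Bⱼ`; composing it with
`t ↦ exp (i t)` gives a character in `W` realising any prescribed tuple.
-/

open Set

lemma LinearIndependent.exists_linearMap_apply_eq {ι K V W : Type*} [Field K]
    [AddCommGroup V] [Module K V] [AddCommGroup W] [Module K W] {v : ι → V}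
    (hv : LinearIndependent K v) (w : ι → W) : ∃ f : V →ₗ[K] W, ∀ i, f (v i) = w i := by
  obtain ⟨f, hf⟩ := LinearMap.exists_extend ((Module.Basis.span hv).constr K w)
  refine ⟨f, fun i => ?_⟩
  have hvi : (Module.Basis.span hv i : V) = v i :=
    congrArg Subtype.val (Module.Basis.span_apply hv i)
  rw [← hvi, ← Submodule.subtype_apply, ← LinearMap.comp_apply, hf, Module.Basis.constr_basis]

lemma LinearIndependent.exists_addChar_apply_eq {ι V : Type*} [AddCommGroup V] [Module ℚ V]
    {v : ι → V} (hv : LinearIndependent ℚ v) (c : ι → Circle) :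
    ∃ ψ : AddChar V Circle, ∀ i, ψ (v i) = c i := by
  choose t ht using fun i => Circle.exp_surjective (c i)
  obtain ⟨f, hf⟩ := hv.exists_linearMap_apply_eq t
  exact ⟨Real.probChar.compAddMonoidHom f.toAddMonoidHom, fun i => by
    simp [Real.probChar_apply', hf, ht]⟩

lemma LinearIndependent.div_intCast {ι K : Type*} [Field K] [CharZero K] {v : ι → K}
    (hv : LinearIndependent ℚ v) {c : ι → ℤ} (hc : ∀ i, c i ≠ 0) :
    LinearIndependent ℚ fun i => v i / c i := by
  convert hv.units_smul fun i => Units.mk0 ((c i : ℚ)⁻¹) (by simpa using hc i) using 1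
  ext i
  simp [div_eq_inv_mul, Rat.smul_def]

lemma AddChar.map_div_intCast_zpow {K M : Type*} [Field K] [CharZero K] [DivisionMonoid M]
    (ψ : AddChar K M) {n : ℤ} (hn : n ≠ 0) (x : K) : ψ (x / n) ^ n = ψ x := by
  rw [← map_zsmul_eq_zpow, zsmul_eq_mul, mul_div_cancel₀ x (Int.cast_ne_zero.mpr hn)]

/-- Let `l₁,…,l_k, h₁,…,h_q ∈ ℝ` be jointly ℤ-independent, let
`m₁,…,m_k, n₁,…,n_q` be nonzero integers, `A₁,…,A_k ⊆ 𝕋` arbitrary and `B₁,…,B_q ⊆ 𝕋`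
nonempty.  With `W` the set of (not necessarily continuous) homomorphisms `ψ : (ℝ,+) → 𝕋`
with `ψ(l_i/m_i) ∈ A_i` and `ψ(h_j/n_j) ∈ B_j` for all `i, j`, the set of tuples
`(ψ(l₁),…,ψ(l_k))` for `ψ ∈ W` equals `A₁^{m₁} × ⋯ × A_k^{m_k}`. -/
theorem statement6 {k q : ℕ} (l : Fin k → ℝ) (h : Fin q → ℝ)
    (hindep : LinearIndependent ℚ (Sum.elim l h))
    (m : Fin k → ℤ) (hm : ∀ i, m i ≠ 0)
    (n : Fin q → ℤ) (hn : ∀ j, n j ≠ 0)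
    (A : Fin k → Set Circle) (B : Fin q → Set Circle) (hB : ∀ j, (B j).Nonempty) :
    (fun ψ : AddChar ℝ Circle => fun i : Fin k => ψ (l i)) ''
        {ψ : AddChar ℝ Circle |
          (∀ i : Fin k, ψ (l i / (m i : ℝ)) ∈ A i) ∧
          (∀ j : Fin q, ψ (h j / (n j : ℝ)) ∈ B j)}
      = Set.univ.pi (fun i : Fin k => (fun a : Circle => a ^ (m i)) '' A i) := by
  ext x
  simp only [mem_image, mem_ofPred_eq, mem_univ_pi]
  constructor
  · rintro ⟨ψ, ⟨hψA, -⟩, rfl⟩ i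
    exact ⟨_, hψA i, ψ.map_div_intCast_zpow (hm i) (l i)⟩
  · intro hx
    choose a ha hax using hx
    choose b hb using hB
    have hscaled := hindep.div_intCast (c := Sum.elim m n) (Sum.forall.2 ⟨hm, hn⟩)
    obtain ⟨ψ, hψ⟩ := hscaled.exists_addChar_apply_eq (Sum.elim a b)
    have hψA : ∀ i, ψ (l i / m i) = a i := fun i => hψ (.inl i)
    have hψB : ∀ j, ψ (h j / n j) = b j := fun j => hψ (.inr j)
    refine ⟨ψ, ⟨fun i => hψA i ▸ ha i, fun j => hψB j ▸ hb j⟩, funext fun i => ?_⟩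
    rw [← ψ.map_div_intCast_zpow (hm i), hψA, hax]
end

section
/- Let l₁, …, l_k ∈ ℝ be ℤ-independent. Then the pushforward, under the map π̂_L : G_Bohr → 𝕋^k, ψ ↦ (ψ(l₁), …, ψ(l_k)), of the Haar probability measure μ_Bohr of the compact group G_Bohr equals the Haar probability measure of the compact group 𝕋^k. -/
/-!
Since `𝕋` is divisible, it is an injective `ℤ`-module, so any assignment `lᵢ ↦ tᵢ` on the
free abelian group generated by the independent `lᵢ` extends to a character of `ℝ`. Hence
`ψ ↦ (ψ(lᵢ))ᵢ` is a continuous surjective homomorphism from the compact group `G_Bohr` onto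
`𝕋^k`, and such a homomorphism pushes the Haar probability measure forward to the Haar
probability measure.
-/

open MeasureTheory

/-- The Bohr compactification of `ℝ`, realized as the group of all (not necessarily
continuous) group homomorphisms `(ℝ, +) → 𝕋`, viewed as a subgroup of the product group
`∏_{x ∈ ℝ} 𝕋`; as a subtype it carries the topology of pointwise convergence. -/
noncomputable def bohrSubgroup : Subgroup (ℝ → Circle) where
  carrier := {ψ | ∀ x y : ℝ, ψ (x + y) = ψ x * ψ y}
  mul_mem' := by
    intro a b ha hb x y
    simp only [Pi.mul_apply, ha x y, hb x y]
    exact mul_mul_mul_comm _ _ _ _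
  one_mem' := by intro x y; simp
  inv_mem' := by
    intro a ha x y
    simp only [Pi.inv_apply, ha x y, mul_inv]

/-- The Bohr compactification of `ℝ` (as a type, with the topology of pointwise
convergence inherited from the product `∏_{x ∈ ℝ} 𝕋`). -/
abbrev GBohr : Type := bohrSubgroup

noncomputable instance : MeasurableSpace Circle := borel _
instance : BorelSpace Circle := ⟨rfl⟩

noncomputable instance : MeasurableSpace GBohr := borel _
instance : BorelSpace GBohr := ⟨rfl⟩

theorem isClosed_bohrSubgroup : IsClosed (bohrSubgroup : Set (ℝ → Circle)) := by
  change IsClosed {ψ : ℝ → Circle | ∀ x y, ψ (x + y) = ψ x * ψ y}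
  simp only [Set.ofPred_forall]
  exact isClosed_iInter fun x => isClosed_iInter fun y =>
    isClosed_eq (continuous_apply _) ((continuous_apply x).mul (continuous_apply y))

instance : CompactSpace GBohr :=
  isCompact_iff_compactSpace.mp isClosed_bohrSubgroup.isCompact

noncomputable instance : DivisibleBy (Additive Circle) ℤ :=
  Function.Surjective.divisibleBy Circle.expHom Circle.exp_surjective
    fun x n => map_zsmul Circle.expHom n x

theorem AddMonoidHom.exists_apply_eq_of_linearIndependent {ι M A : Type*} [AddCommGroup M]
    [AddCommGroup A] [DivisibleBy A ℤ] {v : ι → M} (hv : LinearIndependent ℤ v) (t : ι → A) :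
    ∃ h : M →+ A, ∀ i, h (v i) = t i := by
  let b := Module.Basis.span hv
  obtain ⟨h, hh⟩ := (Module.Baer.of_divisible A).extension_property_addMonoidHom
    (Submodule.span ℤ (Set.range v)).subtype.toAddMonoidHom Subtype.val_injective
    (b.constr ℤ t).toAddMonoidHom
  refine ⟨h, fun i => ?_⟩
  calc h (v i) = h (b i) := by rw [Module.Basis.span_apply]
    _ = b.constr ℤ t (b i) := DFunLike.congr_fun hh (b i)
    _ = t i := b.constr_basis ℤ t i

section

variable {ι : Type*}

noncomputable def bohrEval (l : ι → ℝ) : GBohr →* (ι → Circle) where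
  toFun ψ i := (ψ : ℝ → Circle) (l i)
  map_one' := rfl
  map_mul' _ _ := rfl

theorem continuous_bohrEval (l : ι → ℝ) : Continuous (bohrEval l) :=
  continuous_pi fun i => (continuous_apply (l i)).comp continuous_subtype_val

theorem bohrEval_surjective {l : ι → ℝ} (hl : LinearIndependent ℚ l) :
    Function.Surjective (bohrEval l) := by
  intro t
  obtain ⟨h, hh⟩ := AddMonoidHom.exists_apply_eq_of_linearIndependent
    (hl.restrict_scalars' ℤ) (fun i => Additive.ofMul (t i))
  exact ⟨⟨fun x => (h x).toMul, fun x y => by simp⟩,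
    funext fun i => congrArg Additive.toMul (hh i)⟩

end

/-- For ℤ-independent reals `l₁, …, l_k`, the pushforward of the Haar
probability measure of `G_Bohr` under `ψ ↦ (ψ(l₁), …, ψ(l_k))` is the Haar probability
measure of the torus `𝕋^k`. -/
theorem statement8 {k : ℕ} (l : Fin k → ℝ) (hl : LinearIndependent ℚ l)
    (μB : Measure GBohr) [μB.IsHaarMeasure] [IsProbabilityMeasure μB]
    (μT : Measure (Fin k → Circle)) [μT.IsHaarMeasure] [IsProbabilityMeasure μT] :
    μB.map (fun ψ : GBohr => fun i : Fin k => (ψ : ℝ → Circle) (l i)) = μT :=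
  ((bohrEval l).measurePreserving (continuous_bohrEval l) (bohrEval_surjective hl)
    (by simp)).map_eq
end

section
/- For all r, τ, c ∈ ℝ, setting β_c := √(c²r² + 1/4), the 2×2 complex matrix with entries [[cos(β_c τ) + (i/(2β_c))·sin(β_c τ), (cr/β_c)·sin(β_c τ)], [−(cr/β_c)·sin(β_c τ), cos(β_c τ) − (i/(2β_c))·sin(β_c τ)]] equals the matrix exponential exp(−(τ/2)·(2rc·τ₂ + τ₃)). -/
/-!
Since `τ₂` and `τ₃` square to `-1` and anticommute, `M = 2rc τ₂ + τ₃` satisfies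
`M² = -(4c²r² + 1) = -(2β_c)²`. Hence `N = M / (2β_c)` squares to `-1`, so it spans a copy of `ℂ`
inside the matrix algebra, where the exponential is given by Euler's formula
`exp(θ N) = cos θ + sin θ N`.
-/

open Matrix

/-- The matrix `τ₂ = [[0, −1], [1, 0]]`. -/
noncomputable def tau2 : Matrix (Fin 2) (Fin 2) ℂ := !![0, -1; 1, 0]

/-- The matrix `τ₃ = [[−i, 0], [0, i]]`. -/
noncomputable def tau3 : Matrix (Fin 2) (Fin 2) ℂ := !![-Complex.I, 0; 0, Complex.I]

/-- The matrix `A(τ,c)` (for the parameter `r`), with `β_c = √(c²r² + 1/4)`. -/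
noncomputable def Amat (r τ c : ℝ) : Matrix (Fin 2) (Fin 2) ℂ :=
  !![(Real.cos (Real.sqrt (c^2*r^2 + 1/4) * τ) : ℂ)
        + (Complex.I / (2 * (Real.sqrt (c^2*r^2 + 1/4) : ℂ)))
          * (Real.sin (Real.sqrt (c^2*r^2 + 1/4) * τ) : ℂ),
      ((c * r / Real.sqrt (c^2*r^2 + 1/4)) * Real.sin (Real.sqrt (c^2*r^2 + 1/4) * τ) : ℝ);
    -(((c * r / Real.sqrt (c^2*r^2 + 1/4)) * Real.sin (Real.sqrt (c^2*r^2 + 1/4) * τ) : ℝ) : ℂ),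
      (Real.cos (Real.sqrt (c^2*r^2 + 1/4) * τ) : ℂ)
        - (Complex.I / (2 * (Real.sqrt (c^2*r^2 + 1/4) : ℂ)))
          * (Real.sin (Real.sqrt (c^2*r^2 + 1/4) * τ) : ℂ)]

namespace NormedSpace

variable {𝔹 : Type*} [NormedRing 𝔹] [NormedAlgebra ℝ 𝔹]

theorem exp_smul_of_mul_self_eq_neg_one {N : 𝔹} (hN : N * N = -1) (θ : ℝ) :
    exp (θ • N) = Real.cos θ • (1 : 𝔹) + Real.sin θ • N := by
  -- `map_exp` needs some `ℚ`-algebra structure; `exp` itself does not depend on the choice.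
  let _ : Algebra ℚ 𝔹 := Algebra.compHom 𝔹 (algebraMap ℚ ℝ)
  let f : ℂ →ₐ[ℝ] 𝔹 := Complex.lift ⟨N, hN⟩
  have hf : Continuous f := f.toLinearMap.continuous_of_finiteDimensional
  have hθ : f (θ * Complex.I) = θ • N := by simp [f]
  rw [← hθ, ← map_exp f hf, ← Complex.exp_eq_exp_ℂ, Complex.exp_mul_I, ← Complex.ofReal_cos,
    ← Complex.ofReal_sin]
  simp [f, Algebra.algebraMap_eq_smul_one, Complex.cos_ofReal_re, Complex.sin_ofReal_re]

theorem exp_smul_of_mul_self_eq_neg_sq {M : 𝔹} {b : ℝ} (hb : b ≠ 0) (hM : M * M = -(b ^ 2 • 1))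
    (t : ℝ) : exp (t • M) = Real.cos (b * t) • (1 : 𝔹) + (Real.sin (b * t) / b) • M := by
  have hN : (b⁻¹ • M) * (b⁻¹ • M) = -1 := by
    rw [smul_mul_smul_comm, hM, smul_neg, smul_smul]
    field_simp
    simp
  have hM' : t • M = (b * t) • b⁻¹ • M := by rw [smul_smul]; field_simp
  rw [hM', exp_smul_of_mul_self_eq_neg_one hN, smul_smul, div_eq_mul_inv]

end NormedSpace

theorem Matrix.exp_smul_of_mul_self_eq_neg_sq {n α : Type*} [Fintype n] [DecidableEq n]
    [NormedRing α] [NormedAlgebra ℝ α] {M : Matrix n n α} {b : ℝ} (hb : b ≠ 0)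
    (hM : M * M = -(b ^ 2 • 1)) (t : ℝ) :
    NormedSpace.exp (t • M) =
      Real.cos (b * t) • (1 : Matrix n n α) + (Real.sin (b * t) / b) • M := by
  let _ : NormedRing (Matrix n n α) := Matrix.linftyOpNormedRing
  let _ : NormedAlgebra ℝ (Matrix n n α) := Matrix.linftyOpNormedAlgebra
  exact NormedSpace.exp_smul_of_mul_self_eq_neg_sq hb hM t

theorem tau2_mul_self : tau2 * tau2 = -1 := by
  ext i j; fin_cases i <;> fin_cases j <;> simp [tau2]

theorem tau3_mul_self : tau3 * tau3 = -1 := by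
  ext i j; fin_cases i <;> fin_cases j <;> simp [tau3]

theorem tau2_mul_tau3 : tau2 * tau3 = -(tau3 * tau2) := by
  ext i j; fin_cases i <;> fin_cases j <;> simp [tau2, tau3]

theorem smul_tau2_add_tau3_mul_self (x : ℝ) :
    (x • tau2 + tau3) * (x • tau2 + tau3) = -((x ^ 2 + 1) • 1) := by
  simp only [add_mul, mul_add, smul_mul_assoc, mul_smul_comm, tau2_mul_self,
    tau3_mul_self, tau2_mul_tau3]
  module

/-- For all `r, τ, c ∈ ℝ`, with `β_c = √(c²r² + 1/4)`, the matrix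
`A(τ,c)` equals the matrix exponential `exp(−(τ/2)·(2rc·τ₂ + τ₃))`. -/
theorem statement12 (r τ c : ℝ) :
    Amat r τ c
      = NormedSpace.exp
          ((-(τ : ℂ) / 2) • ((2 * (r : ℂ) * (c : ℂ)) • tau2 + tau3)) := by
  set β := Real.sqrt (c ^ 2 * r ^ 2 + 1 / 4) with hβ_def
  have hβ : 0 < β := Real.sqrt_pos.mpr (by positivity)
  have hβ_sq : (2 * β) ^ 2 = (2 * c * r) ^ 2 + 1 := by
    rw [mul_pow, hβ_def, Real.sq_sqrt (by positivity)]
    ring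
  have hM : ((2 * c * r) • tau2 + tau3) * ((2 * c * r) • tau2 + tau3) = -((2 * β) ^ 2 • 1) := by
    rw [smul_tau2_add_tau3_mul_self, hβ_sq]
  have hX : (-(τ : ℂ) / 2) • ((2 * (r : ℂ) * (c : ℂ)) • tau2 + tau3)
      = (-τ / 2) • ((2 * c * r) • tau2 + tau3) := by
    rw [← Complex.coe_smul, ← Complex.coe_smul]
    push_cast
    ring_nf
  rw [hX, Matrix.exp_smul_of_mul_self_eq_neg_sq (by positivity) hM,
    show 2 * β * (-τ / 2) = -(β * τ) by ring, Real.cos_neg, Real.sin_neg, Amat, ← hβ_def]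
  ext i j
  fin_cases i <;> fin_cases j <;> simp [tau2, tau3, sub_eq_add_neg] <;> field_simp
end

section
/- Let r > 0 and 0 < τ < 2π. Then there exist c₁, c₂ ∈ ℝ such that A(τ,c₁)·A(τ,c₂) ≠ A(τ,c₂)·A(τ,c₁); consequently the set { A(τ,c) : c ∈ ℝ } is not contained in any commutative subgroup of SU(2). -/
open Matrix

/-- For `r > 0` and `0 < τ < 2π` there exist `c₁, c₂ ∈ ℝ` with
`A(τ,c₁)·A(τ,c₂) ≠ A(τ,c₂)·A(τ,c₁)`; consequently the set `{A(τ,c) : c ∈ ℝ}` is not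
contained in any commutative subgroup of `SU(2)` (a subgroup of the unitary group all of
whose elements have determinant `1`). -/
theorem statement13 (r τ : ℝ) (hr : 0 < r) (hτ : 0 < τ) (hτ' : τ < 2 * Real.pi) :
    (∃ c₁ c₂ : ℝ, Amat r τ c₁ * Amat r τ c₂ ≠ Amat r τ c₂ * Amat r τ c₁) ∧
    ¬ ∃ H : Subgroup (Matrix.unitaryGroup (Fin 2) ℂ),
        (∀ u ∈ H, Matrix.det (u : Matrix (Fin 2) (Fin 2) ℂ) = 1) ∧
        (∀ u ∈ H, ∀ v ∈ H, u * v = v * u) ∧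
        (∀ c : ℝ, ∃ u ∈ H, (u : Matrix (Fin 2) (Fin 2) ℂ) = Amat r τ c) := by
  have key : ∃ c₁ c₂ : ℝ, Amat r τ c₁ * Amat r τ c₂ ≠ Amat r τ c₂ * Amat r τ c₁ := by

    have hπ := Real.pi_pos
    set β : ℝ := 3 * Real.pi / (2 * τ) with hβ
    have hβpos : 0 < β := by positivity
    have hβgt : (1:ℝ)/2 < β := by
      rw [hβ, lt_div_iff₀ (by positivity)]
      nlinarith
    set c₂ : ℝ := Real.sqrt (β^2 - 1/4) / r with hc₂
    have hc₂pos : 0 < c₂ := by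
      apply div_pos _ hr
      apply Real.sqrt_pos.2
      nlinarith
    have hc2sq : c₂^2 * r^2 + 1/4 = β^2 := by
      rw [hc₂, div_pow, Real.sq_sqrt (by nlinarith)]
      field_simp
      ring
    have hsqrt : Real.sqrt (c₂^2 * r^2 + 1/4) = β := by
      rw [hc2sq, Real.sqrt_sq hβpos.le]
    have hβτ : β * τ = 3 * Real.pi / 2 := by
      rw [hβ]; field_simp
    have hsin : Real.sin (β * τ) = -1 := by
      rw [hβτ, show (3*Real.pi/2 : ℝ) = Real.pi + Real.pi/2 by ring]
      simp [Real.sin_add]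
    have hcos : Real.cos (β * τ) = 0 := by
      rw [hβτ, show (3*Real.pi/2 : ℝ) = Real.pi + Real.pi/2 by ring]
      simp [Real.cos_add]
    have hsqrt0 : Real.sqrt ((0:ℝ)^2*r^2 + 1/4) = 1/2 := by
      rw [show ((0:ℝ)^2*r^2+1/4) = (1/2)^2 by norm_num, Real.sqrt_sq (by norm_num)]
    have hsinτ : 0 < Real.sin ((1:ℝ)/2 * τ) := by
      apply Real.sin_pos_of_pos_of_lt_pi <;> nlinarith
    refine ⟨0, c₂, ?_⟩
    intro h
    have h01 := congrFun (congrFun h 0) 1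
    simp only [Amat, Matrix.mul_apply, Fin.sum_univ_two, hsqrt0, hsqrt, hsin, hcos,
      Matrix.cons_val', Matrix.cons_val_zero, Matrix.cons_val_one, Matrix.head_cons,
      Matrix.empty_val', Matrix.cons_val_fin_one, Matrix.head_fin_const] at h01
    rw [Complex.ext_iff] at h01
    obtain ⟨h1, h2⟩ := h01
    simp [Complex.add_re, Complex.add_im, Complex.mul_re, Complex.mul_im, Complex.div_re,
      Complex.div_im, Complex.normSq, Complex.ofReal_re, Complex.ofReal_im] at h1 h2
    have harg : ((2:ℂ))⁻¹ * (τ:ℂ) = ((1/2*τ:ℝ):ℂ) := by push_cast; ring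
    simp only [harg, Complex.sin_ofReal_re, Complex.sin_ofReal_im, Complex.cos_ofReal_re,
      Complex.cos_ofReal_im] at h1 h2
    set s := Real.sin ((1:ℝ)/2*τ)
    set co := Real.cos ((1:ℝ)/2*τ)
    have hk : 0 < c₂ * r * β / (β * β) := by positivity
    nlinarith [mul_pos hk hsinτ]
  refine ⟨key, ?_⟩
  rintro ⟨H, hdet, hcomm, hmem⟩
  obtain ⟨c₁, c₂, hne⟩ := key
  obtain ⟨u, hu, hu'⟩ := hmem c₁
  obtain ⟨v, hv, hv'⟩ := hmem c₂
  have hcomm' := hcomm u hu v hv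
  apply hne
  have : ((u * v : Matrix.unitaryGroup (Fin 2) ℂ) : Matrix (Fin 2) (Fin 2) ℂ)
      = ((v * u : Matrix.unitaryGroup (Fin 2) ℂ) : Matrix (Fin 2) (Fin 2) ℂ) := by
    rw [hcomm']
  simpa [hu', hv'] using this
end

section
/- Fix r > 0 and 0 < τ < 2π, and for c ∈ ℝ set β_c := √(c²r² + 1/4). Define h_a : ℝ → ℂ by h_a(c) := cos(β_c τ) + (i/(2β_c))·sin(β_c τ) − cos(crτ), and h_b : ℝ → ℂ by h_b(c) := (cr/β_c)·sin(β_c τ) − sin(crτ). Then h_a(c) → 0 and h_b(c) → 0 as c → ±∞ (so both functions vanish at infinity), and h_a(c) ≠ 0 for every c ∈ ℝ. -/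
/-!
With `β = √(a² + 1/4)` and `a = c r`, one has `β - |a| = (1/4)/(β + |a|) ≤ 1/(4β)`; since `sin` and
`cos` are 1-Lipschitz, both `h_a` and `h_b` are bounded by `(|τ| + 2)/(4β)`, which tends to `0`.
The imaginary part of `h_a` is `sin(βτ)/(2β)` and its real part is `cos(βτ) - cos(aτ)`, so a zero
of `h_a` forces `βτ, aτ ∈ πℤ`; but `(βτ)² - (aτ)² = τ²/4` lies strictly between `0` and `π²`.
-/

open Real Filter Topology

lemma sqrt_sq_add_quarter_pos (a : ℝ) : 0 < √(a ^ 2 + 1 / 4) :=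
  Real.sqrt_pos.2 (by positivity)

lemma half_le_sqrt_sq_add_quarter (a : ℝ) : 1 / 2 ≤ √(a ^ 2 + 1 / 4) :=
  (Real.le_sqrt (by norm_num) (by positivity)).2 (by nlinarith [sq_nonneg a])

lemma abs_le_sqrt_sq_add_quarter (a : ℝ) : |a| ≤ √(a ^ 2 + 1 / 4) :=
  Real.abs_le_sqrt (by linarith)

lemma sqrt_sq_add_quarter_sub_abs_le (a : ℝ) :
    √(a ^ 2 + 1 / 4) - |a| ≤ 1 / (4 * √(a ^ 2 + 1 / 4)) := by
  have hsq : √(a ^ 2 + 1 / 4) ^ 2 = a ^ 2 + 1 / 4 := Real.sq_sqrt (by positivity)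
  rw [le_div_iff₀ (by positivity)]
  nlinarith [abs_le_sqrt_sq_add_quarter a, abs_nonneg a, sq_abs a]

lemma tendsto_sqrt_sq_add_quarter_cocompact :
    Tendsto (fun a : ℝ => √(a ^ 2 + 1 / 4)) (cocompact ℝ) atTop :=
  tendsto_atTop_mono abs_le_sqrt_sq_add_quarter tendsto_norm_cocompact_atTop

lemma sq_sub_sq_notMem_Ioo_of_sin_eq_zero {x y : ℝ} (hx : sin x = 0) (hy : sin y = 0) :
    x ^ 2 - y ^ 2 ∉ Set.Ioo 0 (π ^ 2) := by
  obtain ⟨k, rfl⟩ := Real.sin_eq_zero_iff.1 hx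
  obtain ⟨m, rfl⟩ := Real.sin_eq_zero_iff.1 hy
  rintro ⟨hpos, hlt⟩
  have hπ : 0 < π ^ 2 := by positivity
  have h0 : ((0 : ℤ) : ℝ) < ((k ^ 2 - m ^ 2 : ℤ) : ℝ) := by push_cast; nlinarith
  have h1 : ((k ^ 2 - m ^ 2 : ℤ) : ℝ) < ((1 : ℤ) : ℝ) := by push_cast; nlinarith
  have := Int.cast_lt.1 h0
  have := Int.cast_lt.1 h1
  omega

/-- The paper's `h_a(c)` is `h_a τ (c * r)`, and likewise for `h_b`. -/
noncomputable def h_a (τ a : ℝ) : ℂ :=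
  (cos (√(a ^ 2 + 1 / 4) * τ) : ℂ)
    + (Complex.I / (2 * (√(a ^ 2 + 1 / 4) : ℂ))) * (sin (√(a ^ 2 + 1 / 4) * τ) : ℂ)
    - (cos (a * τ) : ℂ)

noncomputable def h_b (τ a : ℝ) : ℝ :=
  a / √(a ^ 2 + 1 / 4) * sin (√(a ^ 2 + 1 / 4) * τ) - sin (a * τ)

lemma h_a_eq_mk (τ a : ℝ) :
    h_a τ a = ⟨cos (√(a ^ 2 + 1 / 4) * τ) - cos (a * τ),
      sin (√(a ^ 2 + 1 / 4) * τ) / (2 * √(a ^ 2 + 1 / 4))⟩ := by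
  rw [Complex.mk_eq_add_mul_I, h_a]
  push_cast
  ring

lemma h_a_ne_zero {τ : ℝ} (hτ : 0 < τ) (hτ' : τ < 2 * π) (a : ℝ) : h_a τ a ≠ 0 := by
  set β := √(a ^ 2 + 1 / 4)
  have hβ : 0 < β := sqrt_sq_add_quarter_pos a
  intro h
  rw [h_a_eq_mk] at h
  obtain ⟨hre, him⟩ : cos (β * τ) - cos (a * τ) = 0 ∧ sin (β * τ) / (2 * β) = 0 :=
    Complex.ext_iff.1 h
  have hsinβ : sin (β * τ) = 0 := by simpa [hβ.ne'] using him
  have hsina : sin (a * τ) = 0 := by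
    refine pow_eq_zero_iff two_ne_zero |>.1 ?_
    linear_combination sin_sq_add_cos_sq (a * τ) - sin_sq_add_cos_sq (β * τ) + sin (β * τ) * hsinβ
      + (cos (β * τ) + cos (a * τ)) * hre
  have hdiff : (β * τ) ^ 2 - (a * τ) ^ 2 = τ ^ 2 / 4 := by
    linear_combination τ ^ 2 * (Real.sq_sqrt (by positivity : 0 ≤ a ^ 2 + 1 / 4))
  refine sq_sub_sq_notMem_Ioo_of_sin_eq_zero hsinβ hsina ⟨?_, ?_⟩ <;> rw [hdiff]
  · positivity
  · nlinarith [pi_pos]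

lemma abs_cos_sqrt_sub_cos_le (τ a : ℝ) :
    |cos (√(a ^ 2 + 1 / 4) * τ) - cos (a * τ)| ≤ |τ| / (4 * √(a ^ 2 + 1 / 4)) := by
  set β := √(a ^ 2 + 1 / 4)
  have hcos : cos (a * τ) = cos (|a| * τ) := by
    rcases abs_choice a with h | h <;> simp [h, neg_mul, cos_neg]
  calc |cos (β * τ) - cos (a * τ)| ≤ |β * τ - |a| * τ| := hcos ▸ Real.abs_cos_sub_cos_le _ _
    _ = (β - |a|) * |τ| := by
      rw [← sub_mul, abs_mul, abs_of_nonneg (sub_nonneg.2 (abs_le_sqrt_sq_add_quarter a))]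
    _ ≤ 1 / (4 * β) * |τ| := by gcongr; exact sqrt_sq_add_quarter_sub_abs_le a
    _ = |τ| / (4 * β) := by ring

lemma norm_h_a_le (τ a : ℝ) : ‖h_a τ a‖ ≤ (|τ| + 2) / (4 * √(a ^ 2 + 1 / 4)) := by
  have hβ := sqrt_sq_add_quarter_pos a
  have him : |sin (√(a ^ 2 + 1 / 4) * τ) / (2 * √(a ^ 2 + 1 / 4))| ≤ 2 / (4 * √(a ^ 2 + 1 / 4)) := by
    rw [abs_div, abs_of_pos (by positivity : 0 < 2 * √(a ^ 2 + 1 / 4))]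
    calc _ ≤ 1 / (2 * √(a ^ 2 + 1 / 4)) := by gcongr; exact abs_sin_le_one _
      _ = _ := by field_simp; norm_num
  calc ‖h_a τ a‖ ≤ |(h_a τ a).re| + |(h_a τ a).im| := Complex.norm_le_abs_re_add_abs_im _
    _ ≤ |τ| / (4 * √(a ^ 2 + 1 / 4)) + 2 / (4 * √(a ^ 2 + 1 / 4)) := by
      rw [h_a_eq_mk]; exact add_le_add (abs_cos_sqrt_sub_cos_le τ a) him
    _ = _ := by ring

lemma h_b_neg (τ a : ℝ) : h_b τ (-a) = -h_b τ a := by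
  simp only [h_b, neg_sq, neg_mul, sin_neg, neg_div]
  ring

lemma abs_h_b_le_of_nonneg (τ : ℝ) {a : ℝ} (ha : 0 ≤ a) :
    |h_b τ a| ≤ (|τ| + 2) / (4 * √(a ^ 2 + 1 / 4)) := by
  set β := √(a ^ 2 + 1 / 4)
  have hβ : 0 < β := sqrt_sq_add_quarter_pos a
  have haβ : a ≤ β := (le_abs_self a).trans (abs_le_sqrt_sq_add_quarter a)
  have hgap : β - a ≤ 1 / (4 * β) := abs_of_nonneg ha ▸ sqrt_sq_add_quarter_sub_abs_le a
  have hsplit : h_b τ a = a / β * (sin (β * τ) - sin (a * τ)) - (β - a) / β * sin (a * τ) := by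
    change a / β * sin (β * τ) - sin (a * τ) = _
    field_simp
    ring
  have hsin : |sin (β * τ) - sin (a * τ)| ≤ (β - a) * |τ| := by
    simpa [← sub_mul, abs_mul, abs_of_nonneg (sub_nonneg.2 haβ)] using
      Real.abs_sin_sub_sin_le (β * τ) (a * τ)
  have hcoef : (β - a) / β ≤ (β - a) * 2 := by
    rw [div_le_iff₀ hβ]
    nlinarith [half_le_sqrt_sq_add_quarter a, sub_nonneg.2 haβ]
  calc |h_b τ a| ≤ 1 * ((β - a) * |τ|) + (β - a) * 2 := by
        rw [hsplit]
        refine (abs_sub _ _).trans (add_le_add ?_ ?_) <;> rw [abs_mul, abs_of_nonneg (by positivity)]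
        · exact mul_le_mul ((div_le_one hβ).2 haβ) hsin (abs_nonneg _) zero_le_one
        · exact (mul_le_of_le_one_right (by positivity) (abs_sin_le_one _)).trans hcoef
    _ = (β - a) * (|τ| + 2) := by ring
    _ ≤ 1 / (4 * β) * (|τ| + 2) := by gcongr
    _ = (|τ| + 2) / (4 * β) := by ring

lemma abs_h_b_le (τ a : ℝ) : |h_b τ a| ≤ (|τ| + 2) / (4 * √(a ^ 2 + 1 / 4)) := by
  rcases le_total 0 a with ha | ha
  · exact abs_h_b_le_of_nonneg τ ha
  · simpa [h_b_neg, neg_sq] using abs_h_b_le_of_nonneg τ (neg_nonneg.2 ha)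

lemma tendsto_div_sqrt_sq_add_quarter_cocompact (C : ℝ) :
    Tendsto (fun a : ℝ => C / (4 * √(a ^ 2 + 1 / 4))) (cocompact ℝ) (𝓝 0) :=
  tendsto_const_nhds.div_atTop (tendsto_sqrt_sq_add_quarter_cocompact.const_mul_atTop four_pos)

lemma tendsto_h_a_cocompact (τ : ℝ) : Tendsto (h_a τ) (cocompact ℝ) (𝓝 0) :=
  squeeze_zero_norm (norm_h_a_le τ) (tendsto_div_sqrt_sq_add_quarter_cocompact _)

lemma tendsto_h_b_cocompact (τ : ℝ) : Tendsto (h_b τ) (cocompact ℝ) (𝓝 0) :=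
  squeeze_zero_norm (abs_h_b_le τ) (tendsto_div_sqrt_sq_add_quarter_cocompact _)

/-- Fix `r > 0` and `0 < τ < 2π`, and set `β_c := √(c²r² + 1/4)`.
The functions `h_a(c) := cos(β_c τ) + (i/(2β_c))·sin(β_c τ) − cos(crτ)` and
`h_b(c) := (cr/β_c)·sin(β_c τ) − sin(crτ)` vanish at infinity (tend to `0` as `c → ±∞`),
and `h_a` vanishes nowhere. -/
theorem statement16 (r τ : ℝ) (hr : 0 < r) (hτ : 0 < τ) (hτ' : τ < 2 * Real.pi) :
    Filter.Tendsto
        (fun c : ℝ =>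
          (Real.cos (Real.sqrt (c^2*r^2 + 1/4) * τ) : ℂ)
            + (Complex.I / (2 * (Real.sqrt (c^2*r^2 + 1/4) : ℂ)))
              * (Real.sin (Real.sqrt (c^2*r^2 + 1/4) * τ) : ℂ)
            - (Real.cos (c * r * τ) : ℂ))
        (Filter.cocompact ℝ) (nhds 0) ∧
    Filter.Tendsto
        (fun c : ℝ =>
          (((c * r / Real.sqrt (c^2*r^2 + 1/4)) * Real.sin (Real.sqrt (c^2*r^2 + 1/4) * τ)
            - Real.sin (c * r * τ) : ℝ) : ℂ))
        (Filter.cocompact ℝ) (nhds 0) ∧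
    ∀ c : ℝ,
      (Real.cos (Real.sqrt (c^2*r^2 + 1/4) * τ) : ℂ)
          + (Complex.I / (2 * (Real.sqrt (c^2*r^2 + 1/4) : ℂ)))
            * (Real.sin (Real.sqrt (c^2*r^2 + 1/4) * τ) : ℂ)
          - (Real.cos (c * r * τ) : ℂ) ≠ 0 := by
  have hscale : Tendsto (· * r) (cocompact ℝ) (cocompact ℝ) := tendsto_cocompact_mul_right₀ hr.ne'
  simp only [← mul_pow]
  refine ⟨(tendsto_h_a_cocompact τ).comp hscale, ?_, fun c => h_a_ne_zero hτ hτ' (c * r)⟩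
  rw [← Complex.ofReal_zero]
  exact ((tendsto_h_b_cocompact τ).comp hscale).ofReal
end
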